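/- Let V_1, V_2 be subspaces of a real inner product space V, a a symmetric positive semidefinite bilinear form on V, and τ > 0. Suppose sequences u_1^n ∈ V_1, u_2^n ∈ V_2 with u^n = u_1^n + u_2^n satisfy the partially explicit scheme: (u^{n+1} - 2u^n + u^{n-1}, w) + (τ²/2) a(u_1^{n+1} + u_1^{n-1} + 2u_2^n, w) = 0 for all w ∈ V_1, and (u^{n+1} - 2u^n + u^{n-1}, w) + τ² a(u_1^n + u_2^n, w) = 0 for all w ∈ V_2. Then the discrete energy E^{n+1/2} = ‖u^{n+1} - u^n‖² + (τ²/2)(‖u_1^{n+1} + u_2^n‖_a² + ‖u_1^n + u_2^{n+1}‖_a²) - (τ²/2)‖u_2^{n+1} - u_2^n‖_a² satisfies E^{n+1/2} = E^{n-1/2}. -/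

import Mathlib

/-!
Test the first equation with `u₁ⁿ⁺¹ - u₁ⁿ⁻¹ ∈ V₁` and the second with `u₂ⁿ⁺¹ - u₂ⁿ⁻¹ ∈ V₂` and
add them. The inner-product terms combine to `⟪uⁿ⁺¹ - 2uⁿ + uⁿ⁻¹, uⁿ⁺¹ - uⁿ⁻¹⟫`, the difference of
the kinetic parts `‖uⁿ⁺¹ - uⁿ‖² - ‖uⁿ - uⁿ⁻¹‖²`, and by bilinearity and symmetry of `a` the
remaining terms are exactly the difference of the potential parts of the two energies.
-/

open RealInnerProductSpace

theorem real_inner_sub_add_eq_norm_sq_sub_norm_sq {V : Type*} [NormedAddCommGroup V]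
    [InnerProductSpace ℝ V] (x y : V) : ⟪x - y, x + y⟫ = ‖x‖ ^ 2 - ‖y‖ ^ 2 := by
  rw [inner_sub_left, inner_add_right, inner_add_right, real_inner_comm x y,
    real_inner_self_eq_norm_sq, real_inner_self_eq_norm_sq]
  ring

theorem LinearMap.leapfrog_energy_increment {R M : Type*} [CommRing R] [AddCommGroup M]
    [Module R M] (a : M →ₗ[R] M →ₗ[R] R) (hsymm : ∀ x y, a x y = a y x) (p q r s t v : M) :
    a (p + r + (2:R) • t) (p - r) + 2 * a (q + t) (s - v)
      = (a (p + t) (p + t) + a (q + s) (q + s) - a (s - t) (s - t))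
        - (a (q + v) (q + v) + a (r + t) (r + t) - a (t - v) (t - v)) := by
  simp only [map_add, map_sub, map_smul, LinearMap.add_apply, LinearMap.sub_apply,
    LinearMap.smul_apply, smul_eq_mul]
  rw [hsymm r p, hsymm t p, hsymm s q, hsymm t s, hsymm v q, hsymm t r, hsymm v t]
  ring

/-- `p, q, r` are the `V₁`-components and `s, t, v` the `V₂`-components at times `n + 1, n, n - 1`. -/
theorem partially_explicit_energy_step {V : Type*} [NormedAddCommGroup V]
    [InnerProductSpace ℝ V] (a : V →ₗ[ℝ] V →ₗ[ℝ] ℝ) (hsymm : ∀ x y, a x y = a y x) (τ : ℝ)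
    {p q r s t v : V}
    (h₁ : ⟪(p + s) - (2:ℝ) • (q + t) + (r + v), p - r⟫
      + (τ ^ 2 / 2) * a (p + r + (2:ℝ) • t) (p - r) = 0)
    (h₂ : ⟪(p + s) - (2:ℝ) • (q + t) + (r + v), s - v⟫ + τ ^ 2 * a (q + t) (s - v) = 0) :
    ‖(p + s) - (q + t)‖ ^ 2 + (τ ^ 2 / 2) * (a (p + t) (p + t) + a (q + s) (q + s))
        - (τ ^ 2 / 2) * a (s - t) (s - t)
      = ‖(q + t) - (r + v)‖ ^ 2 + (τ ^ 2 / 2) * (a (q + v) (q + v) + a (r + t) (r + t))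
        - (τ ^ 2 / 2) * a (t - v) (t - v) := by
  have hkinetic : ⟪(p + s) - (2:ℝ) • (q + t) + (r + v), p - r⟫
      + ⟪(p + s) - (2:ℝ) • (q + t) + (r + v), s - v⟫
      = ‖(p + s) - (q + t)‖ ^ 2 - ‖(q + t) - (r + v)‖ ^ 2 := by
    rw [← inner_add_right, ← real_inner_sub_add_eq_norm_sq_sub_norm_sq]
    congr 1 <;> module
  linear_combination h₁ + h₂ - hkinetic
    - (τ ^ 2 / 2) * LinearMap.leapfrog_energy_increment a hsymm p q r s t v

theorem stmt4_general {V : Type*} [NormedAddCommGroup V] [InnerProductSpace ℝ V]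
    (V1 V2 : Submodule ℝ V)
    (a : V →ₗ[ℝ] V →ₗ[ℝ] ℝ) (hsymm : ∀ x y, a x y = a y x)
    (τ : ℝ)
    (u1 u2 : ℤ → V) (hu1 : ∀ n, u1 n ∈ V1) (hu2 : ∀ n, u2 n ∈ V2)
    (hscheme1 : ∀ n : ℤ, ∀ w ∈ V1,
      ⟪(u1 (n+1) + u2 (n+1)) - (2:ℝ) • (u1 n + u2 n) + (u1 (n-1) + u2 (n-1)), w⟫
        + (τ^2 / 2) * a (u1 (n+1) + u1 (n-1) + (2:ℝ) • u2 n) w = 0)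
    (hscheme2 : ∀ n : ℤ, ∀ w ∈ V2,
      ⟪(u1 (n+1) + u2 (n+1)) - (2:ℝ) • (u1 n + u2 n) + (u1 (n-1) + u2 (n-1)), w⟫
        + τ^2 * a (u1 n + u2 n) w = 0) :
    ∀ n : ℤ,
      ‖(u1 (n+1) + u2 (n+1)) - (u1 n + u2 n)‖^2
        + (τ^2 / 2) * (a (u1 (n+1) + u2 n) (u1 (n+1) + u2 n)
            + a (u1 n + u2 (n+1)) (u1 n + u2 (n+1)))
        - (τ^2 / 2) * a (u2 (n+1) - u2 n) (u2 (n+1) - u2 n)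
      = ‖(u1 n + u2 n) - (u1 (n-1) + u2 (n-1))‖^2
        + (τ^2 / 2) * (a (u1 n + u2 (n-1)) (u1 n + u2 (n-1))
            + a (u1 (n-1) + u2 n) (u1 (n-1) + u2 n))
        - (τ^2 / 2) * a (u2 n - u2 (n-1)) (u2 n - u2 (n-1)) := fun n =>
  partially_explicit_energy_step a hsymm τ
    (hscheme1 n _ (V1.sub_mem (hu1 _) (hu1 _))) (hscheme2 n _ (V2.sub_mem (hu2 _) (hu2 _)))

theorem stmt4 {V : Type*} [NormedAddCommGroup V] [InnerProductSpace ℝ V]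
    (V1 V2 : Submodule ℝ V)
    (a : V →ₗ[ℝ] V →ₗ[ℝ] ℝ) (hsymm : ∀ x y, a x y = a y x) (hpsd : ∀ x, 0 ≤ a x x)
    (τ : ℝ) (hτ : 0 < τ)
    (u1 u2 : ℤ → V) (hu1 : ∀ n, u1 n ∈ V1) (hu2 : ∀ n, u2 n ∈ V2)
    (hscheme1 : ∀ n : ℤ, ∀ w ∈ V1,
      ⟪(u1 (n+1) + u2 (n+1)) - (2:ℝ) • (u1 n + u2 n) + (u1 (n-1) + u2 (n-1)), w⟫
        + (τ^2 / 2) * a (u1 (n+1) + u1 (n-1) + (2:ℝ) • u2 n) w = 0)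
    (hscheme2 : ∀ n : ℤ, ∀ w ∈ V2,
      ⟪(u1 (n+1) + u2 (n+1)) - (2:ℝ) • (u1 n + u2 n) + (u1 (n-1) + u2 (n-1)), w⟫
        + τ^2 * a (u1 n + u2 n) w = 0) :
    ∀ n : ℤ,
      ‖(u1 (n+1) + u2 (n+1)) - (u1 n + u2 n)‖^2
        + (τ^2 / 2) * (a (u1 (n+1) + u2 n) (u1 (n+1) + u2 n)
            + a (u1 n + u2 (n+1)) (u1 n + u2 (n+1)))
        - (τ^2 / 2) * a (u2 (n+1) - u2 n) (u2 (n+1) - u2 n)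
      = ‖(u1 n + u2 n) - (u1 (n-1) + u2 (n-1))‖^2
        + (τ^2 / 2) * (a (u1 n + u2 (n-1)) (u1 n + u2 (n-1))
            + a (u1 (n-1) + u2 n) (u1 (n-1) + u2 n))
        - (τ^2 / 2) * a (u2 n - u2 (n-1)) (u2 n - u2 (n-1)) :=
  stmt4_general V1 V2 a hsymm τ u1 u2 hu1 hu2 hscheme1 hscheme2
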